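/- Suppose n ≥ 4f and f ≥ 1. Model parties as Fin n with party 0 the broadcaster, a set Byz of Byzantine parties with |Byz| ≤ f, and for each value v ∈ {0,1} a set Ack(v) ⊆ Fin n \ {0} of non-broadcaster parties that sent ack for v, where every honest (non-Byzantine) party belongs to Ack(v) for at most one v. If 0 ∈ Byz, |Ack(0)| ≥ n − f − 1 and |Ack(1)| ≥ n − f − 1, then a contradiction follows. -/

import Mathlib

/-!
Both quorums lie among the `n - 1` non-broadcasters and overlap only in Byzantine
non-broadcasters, of which there are at most `f - 1`; inclusion–exclusion then gives
`2 (n - f - 1) ≤ (n - 1) + (f - 1)`, i.e. `n ≤ 3 f`.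
-/

open Finset

theorem card_add_card_le_card_add_card_of_inter_subset {α : Type*} [DecidableEq α]
    {s t u v : Finset α} (hsu : s ⊆ u) (htu : t ⊆ u) (hst : s ∩ t ⊆ v) :
    #s + #t ≤ #u + #v := by
  rw [← card_union_add_card_inter]
  exact Nat.add_le_add (card_le_card (union_subset hsu htu)) (card_le_card hst)

theorem stmt_10_general (n f : ℕ) (hn : 4 * f ≤ n)
    (b : Fin n)
    (Byz : Finset (Fin n)) (hByz : Byz.card ≤ f) (hbByz : b ∈ Byz)
    (Ack : Fin 2 → Finset (Fin n))
    (hA0 : Ack 0 ⊆ Finset.univ \ {b}) (hA1 : Ack 1 ⊆ Finset.univ \ {b})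
    (honest_one : Ack 0 ∩ Ack 1 ⊆ Byz)
    (hc0 : n - f - 1 ≤ (Ack 0).card) (hc1 : n - f - 1 ≤ (Ack 1).card) :
    False := by
  have honest_ack : Ack 0 ∩ Ack 1 ⊆ Byz \ {b} := fun x hx =>
    mem_sdiff.2 ⟨honest_one hx, (mem_sdiff.1 (hA0 (mem_of_mem_inter_left hx))).2⟩
  have hcard := card_add_card_le_card_add_card_of_inter_subset hA0 hA1 honest_ack
  rw [card_univ_sdiff, card_sdiff_of_subset (singleton_subset_iff.2 hbByz)] at hcard
  simp only [Fintype.card_fin, card_singleton] at hcard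
  have hByz_pos : 0 < #Byz := card_pos.2 ⟨b, hbByz⟩
  omega

/-- Set-theoretic 2-round-commit agreement lemma for BRB under `n ≥ 4f` with a
Byzantine broadcaster (party 0): two ack quorums of size `n - f - 1` of
non-broadcaster parties, whose intersection consists only of Byzantine parties,
cannot both exist. -/
theorem stmt_10 (n f : ℕ) (hn : 4 * f ≤ n) (hf : 1 ≤ f)
    (b : Fin n) (hb : b.val = 0)
    (Byz : Finset (Fin n)) (hByz : Byz.card ≤ f) (hbByz : b ∈ Byz)
    (Ack : Fin 2 → Finset (Fin n))
    (hA0 : Ack 0 ⊆ Finset.univ \ {b}) (hA1 : Ack 1 ⊆ Finset.univ \ {b})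
    (honest_one : Ack 0 ∩ Ack 1 ⊆ Byz)
    (hc0 : n - f - 1 ≤ (Ack 0).card) (hc1 : n - f - 1 ≤ (Ack 1).card) :
    False :=
  stmt_10_general n f hn b Byz hByz hbByz Ack hA0 hA1 honest_one hc0 hc1
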